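/- Tight big-M for the Ohm's law relaxation: if |α₁| ≤ π, |α₂| ≤ π, |e| ≤ F, and B ≥ 0, then with M = F + 2πB the constraints M(z₁+z₂) − 2M + e ≤ B(α₁−α₂) ≤ −M(z₁+z₂) + 2M + e are satisfied for all z₁, z₂ ∈ {0,1} with z₁ + z₂ ≤ 1, and when z₁ = z₂ = 1 they are equivalent to B(α₁−α₂) = e. -/
import Mathlib

/-- Tight big-M for the Ohm's law relaxation: with `M = F + 2πB`, the relaxed constraints
hold for all binary `z₁, z₂` with `z₁ + z₂ ≤ 1`, and when `z₁ = z₂ = 1` they are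
equivalent to `B(α₁ − α₂) = e`. -/
theorem bigM_ohms_law_valid
    (B F α₁ α₂ e M : ℝ)
    (hB : 0 ≤ B) (hF : 0 ≤ F)
    (hα₁ : |α₁| ≤ Real.pi) (hα₂ : |α₂| ≤ Real.pi) (he : |e| ≤ F)
    (hM : M = F + 2 * Real.pi * B) :
    (∀ z₁ z₂ : ℝ, (z₁ = 0 ∨ z₁ = 1) → (z₂ = 0 ∨ z₂ = 1) → z₁ + z₂ ≤ 1 →
      M * (z₁ + z₂) - 2 * M + e ≤ B * (α₁ - α₂) ∧
      B * (α₁ - α₂) ≤ -(M * (z₁ + z₂)) + 2 * M + e) ∧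
    ((M * (1 + 1) - 2 * M + e ≤ B * (α₁ - α₂) ∧
      B * (α₁ - α₂) ≤ -(M * (1 + 1)) + 2 * M + e) ↔ B * (α₁ - α₂) = e) := by
  rw [abs_le] at hα₁ hα₂ he
  obtain ⟨h1, h2⟩ := hα₁
  obtain ⟨h3, h4⟩ := hα₂
  obtain ⟨h5, h6⟩ := he
  have hd1 : B * (α₁ - α₂) ≤ 2 * Real.pi * B := by nlinarith
  have hd2 : -(2 * Real.pi * B) ≤ B * (α₁ - α₂) := by nlinarith
  constructor
  · rintro z₁ z₂ (rfl | rfl) (rfl | rfl) hz <;> constructor <;> nlinarith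
  · constructor
    · rintro ⟨ha, hb⟩; linarith
    · intro h; constructor <;> linarith
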